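/- arXiv:1405.5638 — 4 statements merged into one kernel-verified Lean document; each statement's English description precedes it below -/
import Mathlib

section
/- Let F_Q ⊂ F_{Q^2} be finite fields, G = GL_2(F_Q), B the upper triangular Borel subgroup, and χ_1, χ_2 characters of F_Q^×. Embed F_{Q^2}^× into G. Then the inner product ⟨χ_{Ind_B^G(χ_1 ⊗ χ_2)}, 1⟩ over the subgroup F_{Q^2}^× equals 1 if the product character χ_1·χ_2 is trivial on F_Q^×, and equals 0 otherwise. -/
open Classical

/-!
An element of `F_{Q^2}^×` outside `F_Q^×` acts on `F_{Q^2}` without eigenvectors, so no conjugate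
of it lies in `B` and the induced character vanishes there; an element `u` of `F_Q^×` is a central
scalar, where the induced character is `|G|/|B| · χ₁(u) χ₂(u)`. The inner product is therefore
`|G| / (|B| |F_{Q^2}^×|)` times the sum of the character `χ₁ χ₂` over `F_Q^×`, which is `|F_Q^×|`
or `0` by orthogonality, and `|G| |F_Q^×| = |B| |F_{Q^2}^×|`.
-/

open Matrix

section Borel

variable (K : Type*) [Field K] [Fintype K] [DecidableEq K]

def borelFinset : Finset (GL (Fin 2) K) :=
  Finset.univ.filter fun m => (m : Matrix (Fin 2) (Fin 2) K) 1 0 = 0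

variable {K} in
@[simp]
theorem mem_borelFinset {m : GL (Fin 2) K} :
    m ∈ borelFinset K ↔ (m : Matrix (Fin 2) (Fin 2) K) 1 0 = 0 := by
  simp [borelFinset]

theorem card_borelFinset :
    (borelFinset K).card =
      Fintype.card Kˣ * (Fintype.card K * Fintype.card Kˣ) := by
  have hdiag : ∀ m : GL (Fin 2) K, (m : Matrix (Fin 2) (Fin 2) K) 1 0 = 0 →
      (m : Matrix (Fin 2) (Fin 2) K) 0 0 * (m : Matrix (Fin 2) (Fin 2) K) 1 1 ≠ 0 := by
    intro m hm
    simpa [det_fin_two, hm] using ((isUnit_iff_isUnit_det _).1 m.isUnit).ne_zero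
  rw [← Fintype.card_prod, ← Fintype.card_prod, ← Finset.card_univ]
  refine Finset.card_bij'
    (fun m hm => (Units.mk0 _ (left_ne_zero_of_mul (hdiag m (mem_borelFinset.1 hm))),
      (m : Matrix (Fin 2) (Fin 2) K) 0 1,
      Units.mk0 _ (right_ne_zero_of_mul (hdiag m (mem_borelFinset.1 hm)))))
    (fun p _ => GeneralLinearGroup.mkOfDetNeZero !![(p.1 : K), p.2.1; 0, (p.2.2 : K)]
      (by simp [det_fin_two_of]))
    (fun _ _ => Finset.mem_univ _) (fun _ _ => by simp) ?_
    (fun _ _ => by simp)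
  intro m hm
  ext i j
  fin_cases i <;> fin_cases j <;> simp [mem_borelFinset.1 hm]

theorem card_borelFinset_mul_eq_card_GL_mul :
    (borelFinset K).card * (Fintype.card K ^ 2 - 1) =
      Fintype.card (GL (Fin 2) K) * (Fintype.card K - 1) := by
  rw [card_borelFinset, Fintype.card_units,
    ← Nat.card_eq_fintype_card (α := GL (Fin 2) K),
    card_GL_field, Fin.prod_univ_two]
  simp only [Fin.val_zero, Fin.val_one, pow_zero, pow_one, sq, ← Nat.mul_sub_one]
  ring

end Borel

section InducedCharacter

variable {K : Type*} [Field K]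

theorem algebraMap_conj (y : GL (Fin 2) K) (c : K) :
    (y⁻¹ : GL (Fin 2) K) * algebraMap K (Matrix (Fin 2) (Fin 2) K) c * y = algebraMap K _ c := by
  rw [← Algebra.commutes, mul_assoc, Units.inv_mul, mul_one]

theorem det_sub_algebraMap_apply_zero_zero {M : Matrix (Fin 2) (Fin 2) K} (h : M 1 0 = 0) :
    (M - algebraMap K (Matrix (Fin 2) (Fin 2) K) (M 0 0)).det = 0 := by
  simp [det_fin_two, h, algebraMap_eq_diagonal]

theorem conj_apply_one_zero_ne_zero {A : GL (Fin 2) K}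
    (hA : ∀ c : K, IsUnit ((A : Matrix (Fin 2) (Fin 2) K) - algebraMap K _ c))
    (y : GL (Fin 2) K) :
    ((y⁻¹ * A * y : GL (Fin 2) K) : Matrix (Fin 2) (Fin 2) K) 1 0 ≠ 0 := by
  intro h
  set M := ((y⁻¹ * A * y : GL (Fin 2) K) : Matrix (Fin 2) (Fin 2) K)
  set c := M 0 0
  have hconj : M - algebraMap K _ c =
      (y⁻¹ : GL (Fin 2) K) * ((A : Matrix (Fin 2) (Fin 2) K) - algebraMap K _ c) * y := by
    rw [mul_sub, sub_mul, algebraMap_conj]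
    simp only [M, Units.val_mul]
  have hunit : IsUnit (M - algebraMap K _ c) := by
    rw [hconj]
    exact (y⁻¹.isUnit.mul (hA c)).mul y.isUnit
  exact ((isUnit_iff_isUnit_det _).1 hunit).ne_zero (det_sub_algebraMap_apply_zero_zero h)

variable [DecidableEq K]

/-- The character `χ₁ ⊗ χ₂` of `B`, extended by zero to `GL₂(K)`. -/
noncomputable def borelChar (χ₁ χ₂ : MulChar K ℂ) (g : GL (Fin 2) K) : ℂ :=
  if (g : Matrix (Fin 2) (Fin 2) K) 1 0 = 0 then
    χ₁ ((g : Matrix (Fin 2) (Fin 2) K) 0 0) * χ₂ ((g : Matrix (Fin 2) (Fin 2) K) 1 1)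
  else 0

theorem borelChar_conj_eq_zero (χ₁ χ₂ : MulChar K ℂ) {A : GL (Fin 2) K}
    (hA : ∀ c : K, IsUnit ((A : Matrix (Fin 2) (Fin 2) K) - algebraMap K _ c))
    (y : GL (Fin 2) K) : borelChar χ₁ χ₂ (y⁻¹ * A * y) = 0 :=
  if_neg (conj_apply_one_zero_ne_zero hA y)

theorem borelChar_conj_of_eq_algebraMap (χ₁ χ₂ : MulChar K ℂ) {A : GL (Fin 2) K} {c : K}
    (hA : (A : Matrix (Fin 2) (Fin 2) K) = algebraMap K _ c) (y : GL (Fin 2) K) :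
    borelChar χ₁ χ₂ (y⁻¹ * A * y) = χ₁ c * χ₂ c := by
  have hconj : y⁻¹ * A * y = A := by
    ext : 1
    rw [Units.val_mul, Units.val_mul, hA, algebraMap_conj]
  simp [borelChar, hconj, hA, algebraMap_eq_diagonal]

end InducedCharacter

theorem MulChar.sum_units_mul_apply {K : Type*} [Field K] [Fintype K] [DecidableEq K]
    (χ₁ χ₂ : MulChar K ℂ) :
    ∑ u : Kˣ, χ₁ u * χ₂ u =
      if ∀ u : K, u ≠ 0 → χ₁ u * χ₂ u = 1 then (Fintype.card Kˣ : ℂ) else 0 := by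
  let ψ : Kˣ →* ℂ := (χ₁ * χ₂).toMonoidHom.comp (Units.coeHom K)
  have hψ : ψ = 1 ↔ ∀ u : K, u ≠ 0 → χ₁ u * χ₂ u = 1 :=
    ⟨fun h u hu => by simpa [ψ] using DFunLike.congr_fun h (Units.mk0 u hu),
      fun h => MonoidHom.ext fun u => by simpa [ψ] using h u u.ne_zero⟩
  simpa [ψ, hψ, apply_ite] using sum_hom_units ψ

theorem Algebra.isUnit_leftMulMatrix_sub_algebraMap {K L ι : Type*} [Field K] [Field L]
    [Algebra K L] [Fintype ι] [DecidableEq ι] (b : Module.Basis ι K L) {x : L}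
    (hx : x ∉ Set.range (algebraMap K L)) (c : K) :
    IsUnit (leftMulMatrix b x - algebraMap K (Matrix ι ι K) c) := by
  rw [← (leftMulMatrix b).commutes c, ← map_sub]
  exact (IsUnit.mk0 _ (sub_ne_zero.2 fun h => hx ⟨c, h.symm⟩)).map _

theorem Units.mem_range_map_algebraMap {K L : Type*} [Field K] [Semiring L] [Nontrivial L]
    [Algebra K L] {x : Lˣ} (hx : (x : L) ∈ Set.range (algebraMap K L)) :
    x ∈ Set.range (Units.map (algebraMap K L : K →* L)) := by
  obtain ⟨c, hc⟩ := hx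
  have hc0 : c ≠ 0 := by
    rintro rfl
    exact x.ne_zero (by simp [← hc])
  exact ⟨Units.mk0 c hc0, Units.ext hc⟩

theorem stmt_5_general (K L : Type*) [Field K] [Field L] [Algebra K L]
    [Fintype K] [Fintype L] [DecidableEq K] [DecidableEq L]
    (χ₁ χ₂ : MulChar K ℂ)
    (b : Module.Basis (Fin 2) K L)
    (e : Lˣ →* Matrix.GeneralLinearGroup (Fin 2) K)
    (he : ∀ x : Lˣ, (↑(e x) : Matrix (Fin 2) (Fin 2) K) =
      LinearMap.toMatrix b b (LinearMap.mulLeft K (x : L))) :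
    (1 / (Nat.card Lˣ : ℂ)) * ∑ x : Lˣ,
      ((1 : ℂ) / ((Finset.univ.filter fun m : Matrix.GeneralLinearGroup (Fin 2) K =>
          (↑m : Matrix (Fin 2) (Fin 2) K) 1 0 = 0).card : ℂ)) *
        ∑ y : Matrix.GeneralLinearGroup (Fin 2) K,
          (if (↑(y⁻¹ * e x * y) : Matrix (Fin 2) (Fin 2) K) 1 0 = 0 then
            χ₁ ((↑(y⁻¹ * e x * y) : Matrix (Fin 2) (Fin 2) K) 0 0) *
              χ₂ ((↑(y⁻¹ * e x * y) : Matrix (Fin 2) (Fin 2) K) 1 1)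
          else 0) =
    if ∀ u : K, u ≠ 0 → χ₁ u * χ₂ u = 1 then 1 else 0 := by
  have he' (x : Lˣ) : (e x : Matrix (Fin 2) (Fin 2) K) = Algebra.leftMulMatrix b x := he x
  let φ : Kˣ →* Lˣ := Units.map (algebraMap K L : K →* L)
  have hscalar (u : Kˣ) : ∑ y, borelChar χ₁ χ₂ (y⁻¹ * e (φ u) * y) =
      Fintype.card (GL (Fin 2) K) * (χ₁ u * χ₂ u) := by
    have hA : (e (φ u) : Matrix (Fin 2) (Fin 2) K) = algebraMap K _ (u : K) := by
      rw [he', Units.coe_map, MonoidHom.coe_coe, AlgHom.commutes]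
    simp [borelChar_conj_of_eq_algebraMap χ₁ χ₂ hA]
  have helliptic (x : Lˣ) (hx : x ∉ Set.range φ) :
      ∑ y, borelChar χ₁ χ₂ (y⁻¹ * e x * y) = 0 :=
    Finset.sum_eq_zero fun y _ => borelChar_conj_eq_zero χ₁ χ₂ (fun c => he' x ▸
      Algebra.isUnit_leftMulMatrix_sub_algebraMap b (mt Units.mem_range_map_algebraMap hx) c) y
  have hcard : ((borelFinset K).card : ℂ) * Nat.card Lˣ =
      Fintype.card (GL (Fin 2) K) * Fintype.card Kˣ := by
    rw [Nat.card_eq_fintype_card, Fintype.card_units, Fintype.card_units, Module.card_fintype b,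
      Fintype.card_fin]
    exact_mod_cast card_borelFinset_mul_eq_card_GL_mul K
  have hborel : ((borelFinset K).card : ℂ) ≠ 0 := by simp [card_borelFinset]
  change (1 / _) * ∑ x, (1 / ((borelFinset K).card : ℂ)) *
    ∑ y, borelChar χ₁ χ₂ (y⁻¹ * e x * y) = _
  rw [← Fintype.sum_of_injective φ (Units.map_injective (algebraMap K L).injective)
    (fun u => 1 / ((borelFinset K).card : ℂ) * (Fintype.card (GL (Fin 2) K) * (χ₁ u * χ₂ u)))
    _ (fun x hx => by rw [helliptic x hx, mul_zero]) (fun u => by rw [hscalar])]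
  simp_rw [← Finset.mul_sum]
  rw [MulChar.sum_units_mul_apply]
  split_ifs
  · field_simp
    rw [← hcard, mul_comm]
  · simp

/-- The inner product over `F_{Q^2}^×` of the character of the parabolically
induced representation `Ind_B^G(χ₁ ⊗ χ₂)` of `G = GL₂(F_Q)` with the trivial
character equals `1` if `χ₁·χ₂` is trivial on `F_Q^×`, and `0` otherwise.
`F_{Q^2}^×` embeds in `G` via multiplication on `L = F_{Q^2}` in a basis `b`;
the induced character at `g` is `(1/|B|) ∑_{x : x⁻¹gx ∈ B} χ₁((x⁻¹gx)₀₀)·χ₂((x⁻¹gx)₁₁)`. -/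
theorem stmt_5 (K L : Type*) [Field K] [Field L] [Algebra K L]
    [Fintype K] [Fintype L] [DecidableEq K] [DecidableEq L]
    (hdim : Module.finrank K L = 2)
    (χ₁ χ₂ : MulChar K ℂ)
    (b : Module.Basis (Fin 2) K L)
    (e : Lˣ →* Matrix.GeneralLinearGroup (Fin 2) K)
    (he : ∀ x : Lˣ, (↑(e x) : Matrix (Fin 2) (Fin 2) K) =
      LinearMap.toMatrix b b (LinearMap.mulLeft K (x : L))) :
    (1 / (Nat.card Lˣ : ℂ)) * ∑ x : Lˣ,
      ((1 : ℂ) / ((Finset.univ.filter fun m : Matrix.GeneralLinearGroup (Fin 2) K =>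
          (↑m : Matrix (Fin 2) (Fin 2) K) 1 0 = 0).card : ℂ)) *
        ∑ y : Matrix.GeneralLinearGroup (Fin 2) K,
          (if (↑(y⁻¹ * e x * y) : Matrix (Fin 2) (Fin 2) K) 1 0 = 0 then
            χ₁ ((↑(y⁻¹ * e x * y) : Matrix (Fin 2) (Fin 2) K) 0 0) *
              χ₂ ((↑(y⁻¹ * e x * y) : Matrix (Fin 2) (Fin 2) K) 1 1)
          else 0) =
    if ∀ u : K, u ≠ 0 → χ₁ u * χ₂ u = 1 then 1 else 0 :=
  stmt_5_general K L χ₁ χ₂ b e he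
end

section
/- Let F_Q ⊂ F_{Q^2} be finite fields and embed F_{Q^2}^× into G = GL_2(F_Q) via multiplication on F_{Q^2}. Let B be the stabilizer in G of a fixed line of F_{Q^2}. Then G = B · F_{Q^2}^× = F_{Q^2}^× · B, and B ∩ F_{Q^2}^× = F_Q^×. -/
/-!
Multiplication by `L^×` acts transitively on the `K`-lines of `L` (`v ↦ w` via `w * v⁻¹`), and
`GL_K(L)` permutes those lines, so every `g` agrees on the line `d` with some `x ∈ L^×`; then
`x⁻¹ g` stabilizes `d`. On `d = K ∙ v`, multiplication by `x` fixes `d` iff `x v = c v` for a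
unit `c` of `K`, i.e. iff `x = c`.
-/

open Module Pointwise

theorem MonoidHom.exists_eq_map_mul_of_forall_smul_eq {G H X : Type*} [Group G] [Group H]
    [MulAction G X] (e : H →* G) {x : X} (horbit : ∀ g : G, ∃ h : H, e h • x = g • x) (g : G) :
    ∃ h : H, ∃ b : G, b • x = x ∧ g = e h * b :=
  let ⟨h, hh⟩ := horbit g
  ⟨h, (e h)⁻¹ * g, by rw [mul_smul, ← hh, inv_smul_smul], by group⟩

theorem MonoidHom.exists_eq_mul_map_of_forall_smul_eq {G H X : Type*} [Group G] [Group H]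
    [MulAction G X] (e : H →* G) {x : X} (horbit : ∀ g : G, ∃ h : H, e h • x = g • x) (g : G) :
    ∃ b : G, ∃ h : H, b • x = x ∧ g = b * e h := by
  obtain ⟨h, b, hb, hg⟩ := e.exists_eq_map_mul_of_forall_smul_eq horbit g⁻¹
  exact ⟨b⁻¹, h⁻¹, inv_smul_eq_iff.2 hb.symm, by rw [map_inv, ← mul_inv_rev, ← hg, inv_inv]⟩

theorem Submodule.exists_eq_span_singleton_of_finrank_eq_one {K V : Type*} [DivisionRing K]
    [AddCommGroup V] [Module K V] {p : Submodule K V} (hp : finrank K p = 1) :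
    ∃ v : V, v ≠ 0 ∧ p = K ∙ v := by
  obtain ⟨⟨v, hvp⟩, hv, hspan⟩ := finrank_eq_one_iff'.1 hp
  refine ⟨v, by simpa using hv, le_antisymm (fun w hw => ?_) (by simpa using hvp)⟩
  obtain ⟨c, hc⟩ := hspan ⟨w, hw⟩
  exact Submodule.mem_span_singleton.2 ⟨c, congrArg Subtype.val hc⟩

theorem Submodule.finrank_units_smul {K V : Type*} [Semiring K] [AddCommMonoid V] [Module K V]
    (u : (Module.End K V)ˣ) (p : Submodule K V) : finrank K ↥(u • p) = finrank K p :=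
  (LinearMap.GeneralLinearGroup.generalLinearEquiv K V u).finrank_map_eq p

theorem Submodule.units_smul_eq_map {K V : Type*} [Semiring K] [AddCommMonoid V] [Module K V]
    (u : (Module.End K V)ˣ) (p : Submodule K V) : u • p = p.map (u : Module.End K V) :=
  rfl

section Lines

variable {K L : Type*} [Field K] [DivisionRing L] [Algebra K L]

theorem Submodule.map_mulLeft_span_singleton (x v : L) :
    (K ∙ v).map (LinearMap.mulLeft K x) = K ∙ (x * v) := by
  rw [Submodule.map_span, Set.image_singleton, LinearMap.mulLeft_apply]

theorem Submodule.exists_map_mulLeft_eq {p q : Submodule K L} (hp : finrank K p = 1)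
    (hq : finrank K q = 1) : ∃ x : Lˣ, p.map (LinearMap.mulLeft K (x : L)) = q := by
  obtain ⟨v, hv, rfl⟩ := exists_eq_span_singleton_of_finrank_eq_one hp
  obtain ⟨w, hw, rfl⟩ := exists_eq_span_singleton_of_finrank_eq_one hq
  refine ⟨Units.mk0 (w * v⁻¹) (mul_ne_zero hw (inv_ne_zero hv)), ?_⟩
  rw [map_mulLeft_span_singleton, Units.val_mk0, inv_mul_cancel_right₀ hv]

theorem Submodule.map_mulLeft_eq_self_iff {p : Submodule K L} (hp : finrank K p = 1) (x : Lˣ) :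
    p.map (LinearMap.mulLeft K (x : L)) = p ↔ ∃ c : Kˣ, (x : L) = algebraMap K L c := by
  obtain ⟨v, hv, rfl⟩ := exists_eq_span_singleton_of_finrank_eq_one hp
  rw [map_mulLeft_span_singleton, eq_comm, span_singleton_eq_span_singleton]
  refine exists_congr fun c => ?_
  rw [Units.smul_def, Algebra.smul_def, eq_comm]
  exact mul_left_inj' hv

end Lines

theorem stmt_7_general (K L : Type*) [Field K] [Field L] [Algebra K L]
    (d : Submodule K L) (hd : Module.finrank K d = 1)
    (e : Lˣ →* (Module.End K L)ˣ)
    (he : ∀ x : Lˣ, (↑(e x) : Module.End K L) = LinearMap.mulLeft K (x : L)) :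
    (∀ g : (Module.End K L)ˣ, ∃ b : (Module.End K L)ˣ, ∃ x : Lˣ,
      d.map (↑b : Module.End K L) = d ∧ g = b * e x) ∧
    (∀ g : (Module.End K L)ˣ, ∃ x : Lˣ, ∃ b : (Module.End K L)ˣ,
      d.map (↑b : Module.End K L) = d ∧ g = e x * b) ∧
    (∀ x : Lˣ, d.map (↑(e x) : Module.End K L) = d ↔
      ∃ c : Kˣ, (x : L) = algebraMap K L (c : K)) := by
  have horbit (g : (Module.End K L)ˣ) : ∃ x : Lˣ, e x • d = g • d := by
    obtain ⟨x, hx⟩ := Submodule.exists_map_mulLeft_eq hd ((d.finrank_units_smul g).trans hd)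
    exact ⟨x, by rw [d.units_smul_eq_map, he, hx]⟩
  refine ⟨e.exists_eq_mul_map_of_forall_smul_eq horbit,
    e.exists_eq_map_mul_of_forall_smul_eq horbit, fun x => ?_⟩
  rw [he]
  exact Submodule.map_mulLeft_eq_self_iff hd x

/-- Embed `F_{Q^2}^×` into `G = GL(F_{Q^2}) = (End_{F_Q}(F_{Q^2}))ˣ` via
multiplication, and let `B` be the stabilizer of a fixed line `d`.  Then
`G = B·F_{Q^2}^× = F_{Q^2}^×·B` and `B ∩ F_{Q^2}^× = F_Q^×`. -/
theorem stmt_7 (K L : Type*) [Field K] [Field L] [Algebra K L]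
    [Fintype K] [Fintype L]
    (hdim : Module.finrank K L = 2)
    (d : Submodule K L) (hd : Module.finrank K d = 1)
    (e : Lˣ →* (Module.End K L)ˣ)
    (he : ∀ x : Lˣ, (↑(e x) : Module.End K L) = LinearMap.mulLeft K (x : L)) :
    (∀ g : (Module.End K L)ˣ, ∃ b : (Module.End K L)ˣ, ∃ x : Lˣ,
      d.map (↑b : Module.End K L) = d ∧ g = b * e x) ∧
    (∀ g : (Module.End K L)ˣ, ∃ x : Lˣ, ∃ b : (Module.End K L)ˣ,
      d.map (↑b : Module.End K L) = d ∧ g = e x * b) ∧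
    (∀ x : Lˣ, d.map (↑(e x) : Module.End K L) = d ↔
      ∃ c : Kˣ, (x : L) = algebraMap K L (c : K)) :=
  stmt_7_general K L d hd e he
end

section
/- Let F be a field of characteristic zero, K/F a quadratic Galois extension with nontrivial automorphism σ acting entrywise on GL_n(K), and let S = { s ∈ GL_n(K) : σ(s) = s^{-1} }. If s_1, s_2 ∈ S are conjugate in GL_n(K), then they are conjugate by an element of GL_n(F). -/
/-!
If `g s₁ = s₂ g`, then applying `σ` and using `σ(sᵢ) = sᵢ⁻¹` shows that `σ(g)` intertwines `s₁`
and `s₂` too, hence so does the `σ`-fixed matrix `λ g + σ(λ) σ(g)` for every `λ ∈ K`. For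
`λ ≠ 0` it equals `σ(λ) g ((λ / σ(λ)) 1 + g⁻¹ σ(g))`, which is invertible unless `-λ / σ(λ)` is one
of the finitely many eigenvalues of `g⁻¹ σ(g)`; and `λ / σ(λ)` takes infinitely many values
because `F` is infinite.
-/

open Matrix

theorem AlgEquiv.involutive_of_finrank_eq_two {F K : Type*} [Field F] [Field K] [Algebra F K]
    [IsGalois F K] (hdim : Module.finrank F K = 2) (σ : K ≃ₐ[F] K) :
    Function.Involutive σ := by
  have : FiniteDimensional F K := Module.finite_of_finrank_pos (by omega)
  have hσσ : σ ^ 2 = 1 := by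
    rw [← hdim, ← IsGalois.card_aut_eq_finrank]
    exact pow_card_eq_one'
  exact fun x ↦ by simpa [pow_two] using DFunLike.congr_fun hσσ x

theorem AlgEquiv.infinite_range_div_apply {F K : Type*} [Field F] [Infinite F] [Field K]
    [Algebra F K] {σ : K ≃ₐ[F] K} (hσ : σ ≠ 1) :
    (Set.range fun u : Kˣ ↦ (u : K) / σ u).Infinite := by
  obtain ⟨α, hα⟩ : ∃ α, σ α ≠ α := by
    by_contra! h
    exact hσ (AlgEquiv.ext h)
  have hσ_shift (t : F) : σ (algebraMap F K t + α) = algebraMap F K t + σ α := by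
    rw [map_add, σ.commutes]
  have hne (t : F) : algebraMap F K t + α ≠ 0 := by
    intro h
    rw [eq_neg_of_add_eq_zero_right h, map_neg, σ.commutes] at hα
    exact hα rfl
  -- `t ↦ (t + α) / σ (t + α)` is a Möbius transformation in `t`, hence injective
  refine Set.infinite_of_injective_forall_mem (f := fun t : F ↦
    (algebraMap F K t + α) / σ (algebraMap F K t + α)) ?_ fun t ↦ ⟨Units.mk0 _ (hne t), rfl⟩
  intro t s hts
  have hσne (t : F) := (map_ne_zero σ).mpr (hne t)
  rw [div_eq_div_iff (hσne t) (hσne s), hσ_shift, hσ_shift] at hts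
  have : (algebraMap F K t - algebraMap F K s) * (σ α - α) = 0 := by linear_combination hts
  exact (algebraMap F K).injective (sub_eq_zero.mp
    ((mul_eq_zero.mp this).resolve_right (sub_ne_zero.mpr hα)))

theorem Matrix.exists_isUnit_smul_one_add {n K : Type*} [Fintype n] [DecidableEq n] [Field K]
    {s : Set K} (hs : s.Infinite) (M : Matrix n n K) : ∃ r ∈ s, IsUnit (r • 1 + M) := by
  obtain ⟨r, hrs, hr⟩ := (hs.sdiff (-M).finite_spectrum).nonempty
  rw [spectrum.notMem_iff, Algebra.algebraMap_eq_smul_one, sub_neg_eq_add] at hr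
  exact ⟨r, hrs, hr⟩

theorem Units.isUnit_smul_add_smul {K R : Type*} [Field K] [Ring R] [Algebra K R] (g : Rˣ)
    {c d : K} (hd : d ≠ 0) {b : R} (h : IsUnit ((c / d) • 1 + ↑g⁻¹ * b)) :
    IsUnit (c • (g : R) + d • b) := by
  have : c • (g : R) + d • b = d • (g * ((c / d) • 1 + ↑g⁻¹ * b)) := by
    rw [mul_add, mul_smul_comm, mul_one, Units.mul_inv_cancel_left, smul_add, smul_smul,
      mul_div_cancel₀ _ hd]
  rw [this]
  exact (g.isUnit.mul h).smul (Units.mk0 d hd)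

theorem map_mul_eq_mul_of_map_eq_inv {G : Type*} [Group G] (φ : G →* G) {s₁ s₂ g : G}
    (h₁ : φ s₁ = s₁⁻¹) (h₂ : φ s₂ = s₂⁻¹) (hg : g * s₁ = s₂ * g) : φ g * s₁ = s₂ * φ g := by
  have hφg : φ g * s₁⁻¹ = s₂⁻¹ * φ g := by rw [← h₁, ← h₂, ← map_mul, ← map_mul, hg]
  calc φ g * s₁ = s₂ * (s₂⁻¹ * φ g) * s₁ := by group
    _ = s₂ * φ g := by rw [← hφg]; group

theorem Matrix.map_smul_add_smul_map {m n K : Type*} [CommSemiring K] {σ : K →+* K}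
    (hσ : Function.Involutive σ) (c : K) (A : Matrix m n K) :
    (c • A + σ c • A.map σ).map σ = c • A + σ c • A.map σ := by
  ext i j
  simp [hσ _, add_comm]

/-- Let `F` be of characteristic zero, `K/F` quadratic Galois with nontrivial
automorphism `σ` acting entrywise on `GL_n(K)`, and
`S = { s : σ(s) = s⁻¹ }`.  If `s₁, s₂ ∈ S` are conjugate in `GL_n(K)`, they are
conjugate by a `σ`-fixed element (an element of `GL_n(F)`). -/
theorem stmt_17 (F K : Type*) [Field F] [CharZero F] [Field K] [Algebra F K]
    [IsGalois F K] (hdim : Module.finrank F K = 2)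
    (σ : K ≃ₐ[F] K) (hσ : σ ≠ 1)
    (n : ℕ) (s₁ s₂ : Matrix.GeneralLinearGroup (Fin n) K)
    (h₁ : Units.map (RingHom.mapMatrix (σ : K →+* K)).toMonoidHom s₁ = s₁⁻¹)
    (h₂ : Units.map (RingHom.mapMatrix (σ : K →+* K)).toMonoidHom s₂ = s₂⁻¹)
    (g : Matrix.GeneralLinearGroup (Fin n) K)
    (hg : s₁ = g⁻¹ * s₂ * g) :
    ∃ h : Matrix.GeneralLinearGroup (Fin n) K,
      Units.map (RingHom.mapMatrix (σ : K →+* K)).toMonoidHom h = h ∧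
      s₁ = h⁻¹ * s₂ * h := by
  set τ : GL (Fin n) K →* GL (Fin n) K := Units.map (RingHom.mapMatrix (σ : K →+* K)).toMonoidHom
  have hgs : g * s₁ = s₂ * g := by rw [hg]; group
  have hτgs : τ g * s₁ = s₂ * τ g := map_mul_eq_mul_of_map_eq_inv τ h₁ h₂ hgs
  obtain ⟨_, ⟨u, rfl⟩, hu⟩ := exists_isUnit_smul_one_add (σ.infinite_range_div_apply hσ)
    (g⁻¹.val * (τ g).val)
  have hH := g.isUnit_smul_add_smul ((map_ne_zero σ).mpr u.ne_zero) hu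
  refine ⟨hH.unit, Units.ext ?_, ?_⟩
  · exact map_smul_add_smul_map (σ.involutive_of_finrank_eq_two hdim) (u : K) g.val
  · rw [mul_assoc, eq_inv_mul_iff_mul_eq]
    ext : 1
    simp only [Units.val_mul, hH.unit_spec, add_mul, mul_add, smul_mul_assoc, mul_smul_comm]
    rw [← Units.val_mul, hgs, ← Units.val_mul, hτgs, Units.val_mul, Units.val_mul]
end

section
/- Let G be a group with an automorphism θ of order 2, H = G^θ its fixed-point subgroup, i(g) = θ(g)^{-1}, and S = { g ∈ G : θ(g) = g^{-1} }. Assume the map ψ : G → S, g ↦ g·i(g) is surjective, and that any two elements of S conjugate in G are conjugate by an element of H. Then the map ξ : H\G/H → Ad(H)\S sending the double coset HgH to the H-conjugacy class of g·i(g) is a well-defined bijection, and moreover HgH = H i(g) H for every g ∈ G (i.e., the anti-involution i fixes every (H,H)-double coset). -/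
/-!
With `H` the fixed points of `θ`, the map `ψ g = g * (θ g)⁻¹` (here `θ.twist`) satisfies
`ψ (h * g * h') = h * ψ g * h⁻¹` for `h, h' ∈ H`, and `ψ g₁ = ψ g₂` forces `g₂⁻¹ * g₁ ∈ H`;
hence double cosets `H g H` correspond exactly to `H`-conjugacy classes of values of `ψ`.
Since `ψ (θ g)⁻¹ = (θ g)⁻¹ * g` is `G`-conjugate to `ψ g`, and both lie in `S`, they are even
`H`-conjugate, so `g` and `(θ g)⁻¹` share a double coset.
-/

namespace MonoidHom

variable {G : Type*} [Group G] (θ : G →* G)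

def twist (g : G) : G := g * (θ g)⁻¹

variable {θ}

lemma twist_fixed_mul {h : G} (hh : θ h = h) (g : G) :
    θ.twist (h * g) = h * θ.twist g * h⁻¹ := by
  simp only [twist, map_mul, hh, mul_inv_rev, mul_assoc]

lemma twist_mul_fixed {h : G} (hh : θ h = h) (g : G) : θ.twist (g * h) = θ.twist g := by
  simp only [twist, map_mul, hh, mul_inv_rev, mul_assoc, mul_inv_cancel_left]

lemma map_inv_mul_eq_of_twist_eq {g₁ g₂ : G} (he : θ.twist g₁ = θ.twist g₂) :
    θ (g₂⁻¹ * g₁) = g₂⁻¹ * g₁ := by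
  have hg : g₂⁻¹ * g₁ = (θ g₂)⁻¹ * θ g₁ := by
    rw [inv_mul_eq_iff_eq_mul, ← mul_assoc, ← twist, ← he, twist, inv_mul_cancel_right]
  rw [map_mul, map_inv, hg]

theorem exists_fixed_mul_mul_iff_twist_conj (g₁ g₂ : G) :
    (∃ h₁ h₂ : G, θ h₁ = h₁ ∧ θ h₂ = h₂ ∧ g₂ = h₁ * g₁ * h₂) ↔
      ∃ h : G, θ h = h ∧ θ.twist g₂ = h * θ.twist g₁ * h⁻¹ := by
  constructor
  · rintro ⟨h₁, h₂, hh₁, hh₂, rfl⟩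
    exact ⟨h₁, hh₁, by rw [twist_mul_fixed hh₂, twist_fixed_mul hh₁]⟩
  · rintro ⟨h, hh, he⟩
    have hfix := map_inv_mul_eq_of_twist_eq (he.trans (twist_fixed_mul hh g₁).symm)
    exact ⟨h, (h * g₁)⁻¹ * g₂, hh, hfix, by group⟩

lemma map_twist (hinv : ∀ g : G, θ (θ g) = g) (g : G) :
    θ (θ.twist g) = (θ.twist g)⁻¹ := by
  simp only [twist, map_mul, map_inv, hinv, mul_inv_rev, inv_inv]

lemma twist_inv_map (hinv : ∀ g : G, θ (θ g) = g) (g : G) :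
    θ.twist (θ g)⁻¹ = g⁻¹ * θ.twist g * g := by
  simp only [twist, map_inv, hinv, inv_inv, inv_mul_cancel_left]

end MonoidHom

open MonoidHom in
/-- Let `G` be a group with an automorphism `θ` of order two, `H = G^θ`,
`i(g) = θ(g)⁻¹` and `S = { g : θ(g) = g⁻¹ }`.  Assume `ψ : g ↦ g·i(g)` is
surjective onto `S` and that elements of `S` conjugate in `G` are conjugate by
`H`.  Then the map `ξ : H\G/H → Ad(H)\S`, `HgH ↦ Ad(H)·(g·i(g))` is a
well-defined bijection (expressed elementwise: two elements lie in the same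
double coset iff their images are `H`-conjugate, and every element of `S` is
`H`-conjugate to some `g·i(g)`), and moreover `H g H = H i(g) H` for all `g`. -/
theorem stmt_18 (G : Type*) [Group G] (θ : G →* G) (hinv : ∀ g : G, θ (θ g) = g)
    (hψ : ∀ s : G, θ s = s⁻¹ → ∃ g : G, g * (θ g)⁻¹ = s)
    (hconj : ∀ s₁ s₂ : G, θ s₁ = s₁⁻¹ → θ s₂ = s₂⁻¹ →
      (∃ g : G, s₁ = g⁻¹ * s₂ * g) → ∃ h : G, θ h = h ∧ s₁ = h⁻¹ * s₂ * h) :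
    (∀ g₁ g₂ : G,
      (∃ h₁ h₂ : G, θ h₁ = h₁ ∧ θ h₂ = h₂ ∧ g₂ = h₁ * g₁ * h₂) ↔
      (∃ h : G, θ h = h ∧ g₂ * (θ g₂)⁻¹ = h * (g₁ * (θ g₁)⁻¹) * h⁻¹)) ∧
    (∀ s : G, θ s = s⁻¹ → ∃ g h : G, θ h = h ∧ s = h * (g * (θ g)⁻¹) * h⁻¹) ∧
    (∀ g : G, ∃ h₁ h₂ : G, θ h₁ = h₁ ∧ θ h₂ = h₂ ∧ (θ g)⁻¹ = h₁ * g * h₂) := by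
  refine ⟨exists_fixed_mul_mul_iff_twist_conj, fun s hs => ?_, fun g => ?_⟩
  · obtain ⟨g, rfl⟩ := hψ s hs
    exact ⟨g, 1, map_one θ, by group⟩
  · obtain ⟨h, hh, he⟩ := hconj _ _ (map_twist hinv (θ g)⁻¹) (map_twist hinv g)
      ⟨g, twist_inv_map hinv g⟩
    refine (exists_fixed_mul_mul_iff_twist_conj g _).2
      ⟨h⁻¹, by rw [map_inv, hh], by rwa [inv_inv]⟩
end
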